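/- Let A ∈ ℝ^{m×n} with largest singular value λ_max(A) and corresponding normalized singular vector pair (x̄, w̄). Let x⁰ = x̄_r/‖x̄_r‖ where x̄_r is the truncation of x̄ to its r largest-in-magnitude entries (1 ≤ r ≤ m). Then ‖Aᵀ x⁰‖ ≥ √(r/m) · λ_max(A) ≥ √(r/m²) · ‖A‖_F. -/

import Mathlib

open Finset

noncomputable def enorm {ι : Type*} [Fintype ι] (x : ι → ℝ) : ℝ :=
  Real.sqrt (∑ i, x i ^ 2)

def dot {ι : Type*} [Fintype ι] (x y : ι → ℝ) : ℝ := ∑ i, x i * y i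

noncomputable def l0 {ι : Type*} [Fintype ι] (x : ι → ℝ) : ℕ :=
  (Finset.univ.filter fun i => x i ≠ 0).card

def IsTrunc {ι : Type*} [Fintype ι] [DecidableEq ι] (a : ι → ℝ) (r : ℕ) (ar : ι → ℝ) : Prop :=
  ∃ S : Finset ι, S.card = r ∧ (∀ i ∈ S, ar i = a i) ∧ (∀ i ∉ S, ar i = 0) ∧
    ∀ i ∈ S, ∀ j ∉ S, |a j| ≤ |a i|

noncomputable def lmax {m n' : Type*} [Fintype m] [Fintype n'] (A : Matrix m n' ℝ) : ℝ :=
  sSup {c | ∃ x : n' → ℝ, _root_.enorm x = 1 ∧ c = _root_.enorm (A.mulVec x)}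

noncomputable def fnorm {m n' : Type*} [Fintype m] [Fintype n'] (A : Matrix m n' ℝ) : ℝ :=
  Real.sqrt (∑ i, ∑ j, A i j ^ 2)

def tri {n1 n2 n3 : ℕ} (A : Fin n1 → Fin n2 → Fin n3 → ℝ)
    (x : Fin n1 → ℝ) (y : Fin n2 → ℝ) (z : Fin n3 → ℝ) : ℝ :=
  ∑ i, ∑ j, ∑ k, A i j k * x i * y j * z k

def mlin {d : ℕ} {n : Fin d → ℕ} (A : (∀ j, Fin (n j)) → ℝ)
    (x : ∀ j, Fin (n j) → ℝ) : ℝ :=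
  ∑ i, A i * ∏ j, x j (i j)

/-!
Since `A w̄ = λ x̄` with `‖w̄‖ = 1`, Cauchy–Schwarz gives `‖Aᵀ v‖ ≥ ⟨Aᵀ v, w̄⟩ = λ ⟨v, x̄⟩` for
every `v`. For `v = x⁰` one has `⟨x⁰, x̄⟩ = ‖x̄_r‖`, and the `r` largest entries of a unit vector
carry at least the fraction `r/m` of its squared mass, so `‖x̄_r‖ ≥ √(r/m)`. For the second
inequality, every row of `A` has norm at most `λ`, hence `‖A‖_F ≤ √m λ`.
-/

section EuclideanNorm

variable {ι : Type*} [Fintype ι]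

lemma enorm_nonneg (x : ι → ℝ) : 0 ≤ _root_.enorm x := Real.sqrt_nonneg _

lemma enorm_sq (x : ι → ℝ) : _root_.enorm x ^ 2 = ∑ i, x i ^ 2 :=
  Real.sq_sqrt (sum_nonneg fun _ _ => sq_nonneg _)

lemma abs_le_enorm (x : ι → ℝ) (i : ι) : |x i| ≤ _root_.enorm x := by
  rw [← Real.sqrt_sq_eq_abs]
  exact Real.sqrt_le_sqrt (single_le_sum (f := fun i => x i ^ 2) (fun _ _ => sq_nonneg _)
    (mem_univ i))

lemma sum_mul_le_enorm_mul_enorm (x y : ι → ℝ) :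
    ∑ i, x i * y i ≤ _root_.enorm x * _root_.enorm y :=
  Real.sum_mul_le_sqrt_mul_sqrt univ x y

end EuclideanNorm

section SpectralNorm

variable {m n : Type*} [Fintype m] [Fintype n]

lemma fnorm_sq (A : Matrix m n ℝ) : fnorm A ^ 2 = ∑ i, ∑ j, A i j ^ 2 :=
  Real.sq_sqrt (sum_nonneg fun _ _ => sum_nonneg fun _ _ => sq_nonneg _)

lemma enorm_mulVec_le_fnorm_mul (A : Matrix m n ℝ) (x : n → ℝ) :
    _root_.enorm (A.mulVec x) ≤ fnorm A * _root_.enorm x := by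
  refine Real.sqrt_le_iff.2 ⟨mul_nonneg (Real.sqrt_nonneg _) (enorm_nonneg x), ?_⟩
  rw [mul_pow, fnorm_sq, enorm_sq, sum_mul]
  exact sum_le_sum fun i _ => sum_mul_sq_le_sq_mul_sq univ (A i) x

lemma lmax_nonneg (A : Matrix m n ℝ) : 0 ≤ lmax A :=
  Real.sSup_nonneg <| by rintro _ ⟨x, -, rfl⟩; exact enorm_nonneg _

lemma enorm_mulVec_le_lmax (A : Matrix m n ℝ) {x : n → ℝ} (hx : _root_.enorm x = 1) :
    _root_.enorm (A.mulVec x) ≤ lmax A := by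
  refine le_csSup ⟨fnorm A, ?_⟩ ⟨x, hx, rfl⟩
  rintro c ⟨y, hy, rfl⟩
  simpa [hy] using enorm_mulVec_le_fnorm_mul A y

lemma enorm_row_le_lmax (A : Matrix m n ℝ) (i : m) : _root_.enorm (A i) ≤ lmax A := by
  set t := _root_.enorm (A i)
  rcases eq_or_ne t 0 with ht | ht
  · exact ht ▸ lmax_nonneg A
  have hunit : _root_.enorm (fun j => A i j / t) = 1 := by
    rw [_root_.enorm, Real.sqrt_eq_one]
    simp only [div_pow, ← sum_div, ← enorm_sq]
    exact div_self (pow_ne_zero 2 ht)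
  have hentry : A.mulVec (fun j => A i j / t) i = t := by
    simp only [Matrix.mulVec, dotProduct, mul_div_assoc', ← sq, ← sum_div, ← enorm_sq]
    rw [sq, mul_self_div_self]
  calc t = |A.mulVec (fun j => A i j / t) i| := by rw [hentry, abs_of_nonneg (enorm_nonneg _)]
    _ ≤ _root_.enorm (A.mulVec (fun j => A i j / t)) := abs_le_enorm _ i
    _ ≤ lmax A := enorm_mulVec_le_lmax A hunit

lemma fnorm_le_sqrt_card_mul_lmax (A : Matrix m n ℝ) :
    fnorm A ≤ √(Fintype.card m) * lmax A := by
  refine Real.sqrt_le_iff.2 ⟨mul_nonneg (Real.sqrt_nonneg _) (lmax_nonneg A), ?_⟩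
  rw [mul_pow, Real.sq_sqrt (Nat.cast_nonneg _), ← nsmul_eq_mul, ← card_univ, ← sum_const]
  refine sum_le_sum fun i _ => ?_
  rw [← enorm_sq]
  exact pow_le_pow_left₀ (enorm_nonneg _) (enorm_row_le_lmax A i) 2

lemma mul_sum_mul_le_enorm_transpose_mulVec {A : Matrix m n ℝ} {x : m → ℝ} {w : n → ℝ} {σ : ℝ}
    (hw : _root_.enorm w = 1) (hAw : A.mulVec w = fun i => σ * x i) (v : m → ℝ) :
    σ * ∑ i, v i * x i ≤ _root_.enorm (A.transpose.mulVec v) :=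
  calc σ * ∑ i, v i * x i = v ⬝ᵥ A.mulVec w := by
        simp only [hAw, dotProduct, mul_sum]; exact sum_congr rfl fun i _ => by ring
    _ = ∑ j, A.transpose.mulVec v j * w j := by
        rw [Matrix.dotProduct_mulVec, Matrix.mulVec_transpose]; rfl
    _ ≤ _root_.enorm (A.transpose.mulVec v) * _root_.enorm w := sum_mul_le_enorm_mul_enorm _ _
    _ = _root_.enorm (A.transpose.mulVec v) := by rw [hw, mul_one]

end SpectralNorm

section Truncation

variable {ι : Type*} [Fintype ι] [DecidableEq ι]

lemma card_mul_sum_sq_le_card_mul_sum_sq {a : ι → ℝ} {S : Finset ι}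
    (hS : ∀ i ∈ S, ∀ j ∉ S, |a j| ≤ |a i|) :
    #S * ∑ i, a i ^ 2 ≤ Fintype.card ι * ∑ i ∈ S, a i ^ 2 := by
  -- the double sum equals `#Sᶜ * ∑ i ∈ S, a i ^ 2 - #S * ∑ j ∈ Sᶜ, a j ^ 2`
  have hcross : 0 ≤ ∑ i ∈ S, ∑ j ∈ Sᶜ, (a i ^ 2 - a j ^ 2) :=
    sum_nonneg fun i hi => sum_nonneg fun j hj =>
      sub_nonneg.2 (sq_le_sq.2 (hS i hi j (mem_compl.1 hj)))
  have hcard : (Fintype.card ι : ℝ) = #S + #Sᶜ := by exact_mod_cast (card_add_card_compl S).symm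
  simp only [sum_sub_distrib, sum_const, nsmul_eq_mul, ← mul_sum] at hcross
  rw [← sum_add_sum_compl S, hcard]
  linarith

variable {a ar : ι → ℝ} {r : ℕ}

lemma IsTrunc.sum_mul_eq_enorm_sq (h : IsTrunc a r ar) :
    ∑ i, ar i * a i = _root_.enorm ar ^ 2 := by
  obtain ⟨S, -, hin, hout, -⟩ := h
  rw [enorm_sq]
  refine sum_congr rfl fun i _ => ?_
  by_cases hi : i ∈ S
  · rw [hin i hi, sq]
  · rw [hout i hi]; ring

lemma IsTrunc.card_mul_enorm_sq_le (h : IsTrunc a r ar) :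
    r * _root_.enorm a ^ 2 ≤ Fintype.card ι * _root_.enorm ar ^ 2 := by
  obtain ⟨S, rfl, hin, hout, hS⟩ := h
  have hsupp : _root_.enorm ar ^ 2 = ∑ i ∈ S, a i ^ 2 := by
    rw [enorm_sq, ← sum_subset (subset_univ S) fun i _ hi => by rw [hout i hi]; ring]
    exact sum_congr rfl fun i hi => by rw [hin i hi]
  rw [hsupp, enorm_sq]
  exact card_mul_sum_sq_le_card_mul_sum_sq hS

lemma IsTrunc.sqrt_div_card_le_enorm (h : IsTrunc a r ar) (ha : _root_.enorm a = 1) :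
    √(r / Fintype.card ι) ≤ _root_.enorm ar := by
  refine Real.sqrt_le_left (enorm_nonneg ar) |>.2 <|
    div_le_of_le_mul₀ (Nat.cast_nonneg _) (sq_nonneg _) ?_
  simpa [ha, mul_comm] using h.card_mul_enorm_sq_le

lemma IsTrunc.sum_div_enorm_mul_eq (h : IsTrunc a r ar) :
    ∑ i, ar i / _root_.enorm ar * a i = _root_.enorm ar := by
  simp only [div_mul_eq_mul_div, ← sum_div, h.sum_mul_eq_enorm_sq, sq, mul_self_div_self]

end Truncation

lemma sqrt_div_sq_mul_sqrt (a : ℝ) {b : ℝ} (hb : 0 ≤ b) : √(a / b ^ 2) * √b = √(a / b) := by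
  rw [← Real.sqrt_mul' _ hb]
  rcases eq_or_ne b 0 with rfl | hb0
  · simp
  · congr 1; field_simp

theorem stmt_11_general {m n : ℕ} (A : Matrix (Fin m) (Fin n) ℝ)
    (xb : Fin m → ℝ) (wb : Fin n → ℝ)
    (hxb : _root_.enorm xb = 1) (hwb : _root_.enorm wb = 1)
    (hsv1 : A.mulVec wb = fun i => lmax A * xb i)
    (r : ℕ)
    (xr : Fin m → ℝ) (htr : IsTrunc xb r xr)
    (x0 : Fin m → ℝ) (hx0 : x0 = fun i => xr i / _root_.enorm xr) :
    _root_.enorm (A.transpose.mulVec x0) ≥ Real.sqrt ((r : ℝ) / m) * lmax A ∧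
      Real.sqrt ((r : ℝ) / m) * lmax A ≥ Real.sqrt ((r : ℝ) / (m : ℝ) ^ 2) * fnorm A := by
  subst hx0
  have hmass := htr.sqrt_div_card_le_enorm hxb
  have hF := fnorm_le_sqrt_card_mul_lmax A
  rw [Fintype.card_fin] at hmass hF
  constructor
  · calc √(r / m) * lmax A ≤ lmax A * _root_.enorm xr :=
          (mul_comm _ _).trans_le (mul_le_mul_of_nonneg_left hmass (lmax_nonneg A))
      _ = lmax A * ∑ i, xr i / _root_.enorm xr * xb i := by rw [htr.sum_div_enorm_mul_eq]
      _ ≤ _ := mul_sum_mul_le_enorm_transpose_mulVec hwb hsv1 _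
  · calc √(r / (m : ℝ) ^ 2) * fnorm A ≤ √(r / (m : ℝ) ^ 2) * (√m * lmax A) := by gcongr
      _ = √(r / m) * lmax A := by rw [← mul_assoc, sqrt_div_sq_mul_sqrt _ (Nat.cast_nonneg m)]

/-- For a normalized leading singular vector pair (x̄,w̄) of A and x⁰ the
normalized r-truncation of x̄: ‖Aᵀx⁰‖ ≥ √(r/m)·λ_max(A) ≥ √(r/m²)·‖A‖_F. -/
theorem stmt_11 {m n : ℕ} (A : Matrix (Fin m) (Fin n) ℝ) (hA : A ≠ 0)
    (xb : Fin m → ℝ) (wb : Fin n → ℝ)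
    (hxb : _root_.enorm xb = 1) (hwb : _root_.enorm wb = 1)
    (hsv1 : A.mulVec wb = fun i => lmax A * xb i)
    (hsv2 : A.transpose.mulVec xb = fun j => lmax A * wb j)
    (r : ℕ) (hr1 : 1 ≤ r) (hrm : r ≤ m)
    (xr : Fin m → ℝ) (htr : IsTrunc xb r xr)
    (x0 : Fin m → ℝ) (hx0 : x0 = fun i => xr i / _root_.enorm xr) :
    _root_.enorm (A.transpose.mulVec x0) ≥ Real.sqrt ((r : ℝ) / m) * lmax A ∧
      Real.sqrt ((r : ℝ) / m) * lmax A ≥ Real.sqrt ((r : ℝ) / (m : ℝ) ^ 2) * fnorm A :=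
  stmt_11_general A xb wb hxb hwb hsv1 r xr htr x0 hx0
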